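/- arXiv:1812.02107 — 4 statements merged into one kernel-verified Lean document; each statement's English description precedes it below -/
import Mathlib

section
/- For every positive integer n, if the j-th fibbinary number (in increasing order) is the n-th odd fibbinary number, then j = ⌊n·φ²⌋ − 1, where φ = (1+√5)/2 is the golden ratio. Equivalently, Z(n) = ⌊n·φ²⌋ − 1 for all n ≥ 1. -/
/-!
An odd fibbinary number is `4t + 1` with `t` fibbinary, and the number of fibbinary numbers
below a fibbinary `m` is its Zeckendorf value `∑_{i ∈ bits m} F(i+2)` (split off the leading
bit `2^b`: exactly `F(b+2)` fibbinary numbers lie below `2^b`). Hence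
`n = 1 + ∑_{i ∈ bits t} F(i+2)` and `j = 1 + ∑_{i ∈ bits t} F(i+4)`. Binet's formula gives
`F(i+4) = φ² F(i+2) + ψ^(i+2)`, so `n φ² = j + 1 + ψ² (φ - G)` where `G = ∑_{i ∈ bits t} ψ^i`.
As the bits of `t` are never adjacent, `-1 < G < φ`, which puts the error `ψ² (φ - G)`
strictly between `0` and `ψ² φ² = 1`.
-/

/-- A natural number is *fibbinary* if its binary representation
contains no two consecutive ones. -/
def IsFibbinary (m : ℕ) : Prop :=
  ∀ i : ℕ, ¬(m.testBit i = true ∧ m.testBit (i + 1) = true)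

/-- `fibbin n` is the `n`-th fibbinary number, i.e. the `n`-th positive integer
(1-indexed, in increasing order) whose binary representation has no two
consecutive ones. -/
noncomputable def fibbin (n : ℕ) : ℕ :=
  Nat.nth (fun m => 0 < m ∧ IsFibbinary m) (n - 1)

/-- `odfib n` is the `n`-th odd fibbinary number
(1-indexed, in increasing order). -/
noncomputable def odfib (n : ℕ) : ℕ :=
  Nat.nth (fun m => Odd m ∧ IsFibbinary m) (n - 1)

/-- `Z n` is the index `j` such that the `j`-th fibbinary number equals the
`n`-th odd fibbinary number, i.e. `Z n = fibbin⁻¹ (odfib n)`. -/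
noncomputable def Z (n : ℕ) : ℕ :=
  sInf {j : ℕ | 1 ≤ j ∧ fibbin j = odfib n}

open Nat (count fib)

instance : DecidablePred IsFibbinary := fun m =>
  decidable_of_iff (∀ i < m, ¬(m.testBit i = true ∧ m.testBit (i + 1) = true)) <| by
    refine ⟨fun h i => ?_, fun h i _ => h i⟩
    by_cases hi : i < m
    · exact h i hi
    · rw [Nat.testBit_lt_two_pow ((not_lt.1 hi).trans_lt i.lt_two_pow_self)]
      simp

theorem isFibbinary_zero : IsFibbinary 0 := by
  simp [IsFibbinary]

theorem isFibbinary_iff_div_two {m : ℕ} :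
    IsFibbinary m ↔ ¬(m.testBit 0 = true ∧ m.testBit 1 = true) ∧ IsFibbinary (m / 2) := by
  simp only [IsFibbinary, ← Nat.and_forall_add_one (p := fun i => ¬(m.testBit i = true ∧ _)),
    Nat.testBit_add_one m]

theorem isFibbinary_two_mul {s : ℕ} : IsFibbinary (2 * s) ↔ IsFibbinary s := by
  rw [isFibbinary_iff_div_two]
  simp

theorem isFibbinary_four_mul_add_one {s : ℕ} : IsFibbinary (4 * s + 1) ↔ IsFibbinary s := by
  have h : (4 * s + 1) / 2 = 2 * s := by omega
  simp [isFibbinary_iff_div_two (m := 4 * s + 1), Nat.testBit_add_one, h, isFibbinary_two_mul]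

theorem odd_and_isFibbinary_iff {m : ℕ} :
    Odd m ∧ IsFibbinary m ↔ ∃ t, IsFibbinary t ∧ 4 * t + 1 = m := by
  constructor
  · rintro ⟨hodd, hm⟩
    have h1 : m.testBit 1 = false := by
      by_contra h
      exact hm 0 ⟨by simpa [Nat.odd_iff] using hodd, by simpa using h⟩
    simp only [Nat.testBit_add_one, Nat.testBit_zero, decide_eq_false_iff_not] at h1
    obtain ⟨t, rfl⟩ : ∃ t, m = 4 * t + 1 := ⟨m / 4, by rw [Nat.odd_iff] at hodd; omega⟩
    exact ⟨t, isFibbinary_four_mul_add_one.1 hm, rfl⟩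
  · rintro ⟨t, ht, rfl⟩
    exact ⟨⟨2 * t, by ring⟩, isFibbinary_four_mul_add_one.2 ht⟩

theorem Nat.testBit_add_two_pow {s b : ℕ} (hs : s < 2 ^ b) (i : ℕ) :
    (s + 2 ^ b).testBit i = (s.testBit i || decide (b = i)) := by
  rw [← Nat.or_two_pow_eq_add_of_lt hs, Nat.testBit_or, Nat.testBit_two_pow]

theorem isFibbinary_add_two_pow {s b : ℕ} (hs : s < 2 ^ b) :
    IsFibbinary (s + 2 ^ b) ↔ 2 * s < 2 ^ b ∧ IsFibbinary s := by
  have hhigh : ∀ i, b ≤ i → s.testBit i = false := fun i hi =>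
    Nat.testBit_lt_two_pow (hs.trans_le (Nat.pow_le_pow_right two_pos hi))
  simp only [IsFibbinary, Nat.testBit_add_two_pow hs]
  constructor
  · intro h
    refine ⟨?_, fun i hi => h i (by simp [hi.1, hi.2])⟩
    rcases b with _ | c
    · simp_all
    · suffices s < 2 ^ c by rw [pow_succ]; omega
      refine Nat.lt_pow_two_of_testBit s fun i hi => ?_
      rcases hi.eq_or_lt with rfl | hi
      · by_contra hc
        exact h c (by simp_all)
      · exact hhigh i hi
  · rintro ⟨hsb, hs⟩ i ⟨hi, hi1⟩
    by_cases hb : b = i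
    · subst hb
      simp [hhigh (b + 1) (by omega)] at hi1
    by_cases hb1 : b = i + 1
    · subst hb1
      have : s < 2 ^ i := by rw [pow_succ] at hsb; omega
      simp [Nat.testBit_lt_two_pow this] at hi
    · simp only [hb, hb1, decide_false, Bool.or_false] at hi hi1
      exact hs i ⟨hi, hi1⟩

theorem isFibbinary_two_pow (b : ℕ) : IsFibbinary (2 ^ b) := by
  simpa using
    (isFibbinary_add_two_pow (Nat.two_pow_pos b)).2 ⟨Nat.two_pow_pos b, isFibbinary_zero⟩

theorem infinite_setOf_odd_and_isFibbinary : {m | Odd m ∧ IsFibbinary m}.Infinite := by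
  refine Set.infinite_of_injective_forall_mem (f := fun k => 4 * 2 ^ k + 1) ?_ fun k => ?_
  · intro a b hab
    simpa using hab
  · exact odd_and_isFibbinary_iff.2 ⟨_, isFibbinary_two_pow k, rfl⟩

theorem infinite_setOf_pos_and_isFibbinary : {m | 0 < m ∧ IsFibbinary m}.Infinite :=
  infinite_setOf_odd_and_isFibbinary.mono fun _ hm => ⟨hm.1.pos, hm.2⟩

theorem Nat.bitIndices_add_two_pow {r b : ℕ} (hr : r < 2 ^ b) :
    (r + 2 ^ b).bitIndices = r.bitIndices ++ [b] := by
  have hsorted : (r.bitIndices ++ [b]).SortedLT := by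
    refine List.sortedLT_iff_pairwise.2 (List.pairwise_append.2
      ⟨Nat.bitIndices_sorted.pairwise, List.pairwise_singleton _ _, fun i hi k hk => ?_⟩)
    rw [List.mem_singleton.1 hk]
    exact (Nat.pow_lt_pow_iff_right one_lt_two).1
      ((Nat.two_pow_le_of_mem_bitIndices hi).trans_lt hr)
  have := Nat.bitIndices_sum_map_two_pow hsorted
  simp_all

theorem count_isFibbinary_add_two_pow {r b : ℕ} (hr : 2 * r ≤ 2 ^ b) :
    count IsFibbinary (r + 2 ^ b) = count IsFibbinary r + count IsFibbinary (2 ^ b) := by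
  rw [Nat.count_add']
  congr 1
  simp only [Nat.count_eq_card_filter_range]
  refine congrArg _ <| Finset.filter_congr fun k hk => ?_
  rw [Finset.mem_range] at hk
  rw [isFibbinary_add_two_pow (by omega)]
  exact and_iff_right (by omega)

theorem count_isFibbinary_two_pow (b : ℕ) : count IsFibbinary (2 ^ b) = fib (b + 2) := by
  induction b using Nat.twoStepInduction with
  | zero => decide
  | one => decide
  | more b ih0 ih1 =>
    have hsplit : 2 ^ (b + 2) = (2 ^ b + 2 ^ (b + 1)) + 2 ^ b := by ring
    have htop : count (fun k => IsFibbinary (2 ^ b + 2 ^ (b + 1) + k)) (2 ^ b) = 0 := by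
      refine Nat.count_iff_forall_not.2 fun k hk => ?_
      rw [add_right_comm, isFibbinary_add_two_pow (by rw [pow_succ]; omega), pow_succ]
      omega
    rw [hsplit, Nat.count_add, htop, count_isFibbinary_add_two_pow (by rw [pow_succ]; omega),
      ih0, ih1, Nat.fib_add_two (n := b + 2)]
    rfl

theorem count_isFibbinary_eq_sum_fib {m : ℕ} (hm : IsFibbinary m) :
    count IsFibbinary m = (m.bitIndices.map fun i => fib (i + 2)).sum := by
  induction m using Nat.strong_induction_on with
  | _ m ih =>
    rcases m.eq_zero_or_pos with rfl | hpos
    · simp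
    obtain ⟨b, r, hr, rfl⟩ : ∃ b, ∃ r < 2 ^ b, r + 2 ^ b = m := by
      have hlt := Nat.lt_pow_succ_log_self one_lt_two m
      have hle := Nat.pow_log_le_self 2 hpos.ne'
      rw [pow_succ] at hlt
      exact ⟨Nat.log 2 m, m - 2 ^ Nat.log 2 m, by omega, by omega⟩
    obtain ⟨hrb, hr'⟩ := (isFibbinary_add_two_pow hr).1 hm
    rw [count_isFibbinary_add_two_pow hrb.le, count_isFibbinary_two_pow,
      ih r (by simp) hr', Nat.bitIndices_add_two_pow hr]
    simp

theorem count_odd_and_isFibbinary_four_mul_add_one (t : ℕ) :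
    count (fun m => Odd m ∧ IsFibbinary m) (4 * t + 1) = count IsFibbinary t := by
  have hinj : Function.Injective (4 * · + 1) := fun a b h => by simpa using h
  rw [Nat.count_eq_card_filter_range, Nat.count_eq_card_filter_range, eq_comm,
    ← Finset.card_image_of_injective _ hinj]
  congr 1
  ext m
  simp only [Finset.mem_filter, Finset.mem_range, Finset.mem_image, odd_and_isFibbinary_iff]
  constructor
  · rintro ⟨s, ⟨hst, hs⟩, rfl⟩
    exact ⟨by omega, s, hs, rfl⟩
  · rintro ⟨hm, s, hs, rfl⟩
    exact ⟨s, ⟨by omega, hs⟩, rfl⟩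

theorem Nat.count_pos_and_add_one {p : ℕ → Prop} [DecidablePred p] (h0 : p 0) {m : ℕ}
    (hm : 0 < m) :
    count (fun k => 0 < k ∧ p k) m + 1 = count p m := by
  obtain ⟨m, rfl⟩ := Nat.exists_eq_add_of_lt hm
  simp [Nat.count_succ', h0]

theorem count_isFibbinary_fibbin {j : ℕ} (hj : 1 ≤ j) : count IsFibbinary (fibbin j) = j := by
  have hcount := Nat.count_nth_of_infinite infinite_setOf_pos_and_isFibbinary (j - 1)
  have hpos := (Nat.nth_mem_of_infinite infinite_setOf_pos_and_isFibbinary (j - 1)).1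
  rw [fibbin, ← Nat.count_pos_and_add_one isFibbinary_zero hpos]
  omega

theorem Z_eq_of_fibbin_eq {n j : ℕ} (hj : 1 ≤ j) (h : fibbin j = odfib n) : Z n = j := by
  suffices {j' | 1 ≤ j' ∧ fibbin j' = odfib n} = {j} by rw [Z, this, csInf_singleton]
  ext j'
  refine ⟨fun ⟨hj', h'⟩ => ?_, fun hj' => ⟨hj'.symm ▸ hj, hj'.symm ▸ h⟩⟩
  have := Nat.nth_injective infinite_setOf_pos_and_isFibbinary (h'.trans h.symm)
  simp only [Set.mem_singleton_iff]
  omega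

theorem sum_map_pow_bitIndices_two_mul {R : Type*} [Semiring R] (x : R) (m : ℕ) :
    ((2 * m).bitIndices.map (x ^ ·)).sum = x * (m.bitIndices.map (x ^ ·)).sum := by
  rw [Nat.bitIndices_two_mul, List.map_map, ← List.sum_map_mul_left]
  exact congrArg _ <| List.map_congr_left fun i _ => pow_succ' x i

theorem sum_map_pow_bitIndices_two_mul_add_one {R : Type*} [Semiring R] (x : R) (m : ℕ) :
    ((2 * m + 1).bitIndices.map (x ^ ·)).sum = 1 + x * (m.bitIndices.map (x ^ ·)).sum := by
  rw [Nat.bitIndices_two_mul_add_one, List.map_cons, List.sum_cons, pow_zero, List.map_map,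
    ← List.sum_map_mul_left]
  exact congrArg _ <| congrArg _ <| List.map_congr_left fun i _ => pow_succ' x i

open Real goldenRatio

theorem fib_add_two_eq_goldenRatio_sq_mul_add (k : ℕ) :
    (fib (k + 2) : ℝ) = φ ^ 2 * fib k + ψ ^ k := by
  linear_combination fib_succ_sub_goldenRatio_mul_fib (k + 1) +
    φ * fib_succ_sub_goldenRatio_mul_fib k + ψ ^ k * goldenRatio_add_goldenConj

theorem sum_goldenConj_pow_bitIndices_mem_Ioo {t : ℕ} (ht : IsFibbinary t) :
    (t.bitIndices.map (ψ ^ ·)).sum ∈ Set.Ioo (-1) φ := by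
  induction t using Nat.strong_induction_on with
  | _ t ih =>
    rcases t.eq_zero_or_pos with rfl | hpos
    · exact ⟨by simp, by simpa using goldenRatio_pos⟩
    rcases t.even_or_odd' with ⟨s, rfl | rfl⟩
    · obtain ⟨h1, h2⟩ := ih s (by omega) (isFibbinary_two_mul.1 ht)
      rw [sum_map_pow_bitIndices_two_mul]
      constructor <;>
        nlinarith [goldenConj_neg, goldenRatio_mul_goldenConj, goldenRatio_add_goldenConj]
    · obtain ⟨u, hu, hsu⟩ := odd_and_isFibbinary_iff.1 ⟨odd_two_mul_add_one s, ht⟩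
      obtain rfl : s = 2 * u := by omega
      obtain ⟨h1, h2⟩ := ih u (by omega) hu
      rw [sum_map_pow_bitIndices_two_mul_add_one, sum_map_pow_bitIndices_two_mul, ← mul_assoc,
        ← sq]
      have hψ2 : 0 < ψ ^ 2 := sq_pos_of_neg goldenConj_neg
      constructor <;> nlinarith [goldenConj_neg, goldenRatio_mul_goldenConj,
        goldenRatio_add_goldenConj, goldenConj_sq, mul_lt_mul_of_pos_left h1 hψ2,
        mul_lt_mul_of_pos_left h2 hψ2]

theorem cast_count_isFibbinary_four_mul_add_one {t : ℕ} (ht : IsFibbinary t) :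
    (count IsFibbinary (4 * t + 1) : ℝ) =
      1 + φ ^ 2 * count IsFibbinary t + ψ ^ 2 * (t.bitIndices.map (ψ ^ ·)).sum := by
  rw [count_isFibbinary_eq_sum_fib (isFibbinary_four_mul_add_one.2 ht),
    count_isFibbinary_eq_sum_fib ht, show 4 * t + 1 = 2 * (2 * t) + 1 by ring,
    Nat.bitIndices_two_mul_add_one, Nat.bitIndices_two_mul]
  simp only [List.map_cons, List.sum_cons, List.map_map, Nat.cast_add, Nat.cast_list_sum,
    Function.comp_def]
  rw [← List.sum_map_mul_left, ← List.sum_map_mul_left, add_assoc, ← List.sum_map_add]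
  congr 1
  · simp
  · refine congrArg _ <| List.map_congr_left fun i _ => ?_
    rw [← pow_add, add_comm 2 i]
    exact fib_add_two_eq_goldenRatio_sq_mul_add (i + 2)

theorem floor_succ_count_mul_goldenRatio_sq {t : ℕ} (ht : IsFibbinary t) :
    ⌊((count IsFibbinary t + 1 : ℕ) : ℝ) * φ ^ 2⌋ = count IsFibbinary (4 * t + 1) + 1 := by
  obtain ⟨hG1, hG2⟩ := sum_goldenConj_pow_bitIndices_mem_Ioo ht
  have hψ2 : 0 < ψ ^ 2 := sq_pos_of_neg goldenConj_neg
  rw [Int.floor_eq_iff]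
  push_cast
  rw [cast_count_isFibbinary_four_mul_add_one ht]
  constructor <;> nlinarith [goldenRatio_sq, goldenConj_sq, goldenRatio_mul_goldenConj,
    mul_lt_mul_of_pos_left hG1 hψ2, mul_lt_mul_of_pos_left hG2 hψ2]

/-- If the `j`-th fibbinary number is the `n`-th *odd* fibbinary number, then
`j = ⌊n·φ²⌋ − 1`, where `φ = (1+√5)/2` is the golden ratio; equivalently
`Z n = ⌊n·φ²⌋ − 1` for every `n ≥ 1`. -/
theorem odd_fibbinary_index (n j : ℕ) (hn : 1 ≤ n) (hj : 1 ≤ j)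
    (h : fibbin j = odfib n) :
    (j : ℤ) = ⌊(n : ℝ) * ((1 + Real.sqrt 5) / 2) ^ 2⌋ - 1 ∧
    (Z n : ℤ) = ⌊(n : ℝ) * ((1 + Real.sqrt 5) / 2) ^ 2⌋ - 1 := by
  obtain ⟨t, ht, hm⟩ := odd_and_isFibbinary_iff.1 <|
    Nat.nth_mem_of_infinite infinite_setOf_odd_and_isFibbinary (n - 1)
  have hn' : count IsFibbinary t + 1 = n := by
    have := Nat.count_nth_of_infinite infinite_setOf_odd_and_isFibbinary (n - 1)
    rw [← hm, count_odd_and_isFibbinary_four_mul_add_one] at this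
    omega
  have hj' : count IsFibbinary (4 * t + 1) = j := by
    rw [← count_isFibbinary_fibbin hj, h, odfib, hm]
  have hfloor : ⌊(n : ℝ) * ((1 + Real.sqrt 5) / 2) ^ 2⌋ = j + 1 := by
    rw [← hn', ← hj']
    exact floor_succ_count_mul_goldenRatio_sq ht
  rw [Z_eq_of_fibbin_eq hj h, hfloor, add_sub_cancel_right]
  exact ⟨rfl, rfl⟩
end

section
/- For every integer n ≥ 3 and every integer k with 2 ≤ k ≤ F_{n−1}, one has ⌊(F_n + k)·τ⌋ − ⌊(F_n + k − 1)·τ⌋ = ⌊k·τ⌋ − ⌊(k − 1)·τ⌋, where τ = (√5−1)/2 and F_m denotes the m-th Fibonacci number. -/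
/-!
Since `τ = -ψ`, Binet gives `F_{n+1} τ = F_n - (-τ)^{n+1}`, so `(F_{n+1} + m) τ` is
`F_n + m τ` moved by `τ^{n+1}`. The Fibonacci convergents are best approximations of `τ`:
for `0 < m < F_{n+1}` the number `m τ` is at distance at least `τ^n` from every integer
(induction on `n`, peeling `F_{n+2}` off `m`). Hence the move does not change the floor,
`⌊(F_{n+1} + m) τ⌋ = F_n + ⌊m τ⌋`, and the theorem is this identity for `m = k` minus the
one for `m = k - 1`.
-/

open Real goldenRatio

noncomputable def tau : ℝ := (√5 - 1) / 2

theorem tau_eq_neg_goldenConj : tau = -ψ := by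
  rw [tau, goldenConj]; ring

theorem tau_pos : 0 < tau := by
  rw [tau_eq_neg_goldenConj]; linarith [goldenConj_neg]

theorem tau_lt_one : tau < 1 := by
  rw [tau_eq_neg_goldenConj]; linarith [neg_one_lt_goldenConj]

theorem tau_sq : tau ^ 2 = 1 - tau := by
  rw [tau_eq_neg_goldenConj, neg_sq, goldenConj_sq]; ring

theorem fib_succ_mul_tau (n : ℕ) :
    (Nat.fib (n + 1) : ℝ) * tau = Nat.fib n - (-tau) ^ (n + 1) := by
  rw [tau_eq_neg_goldenConj, neg_neg, ← goldenConj_mul_fib_succ_add_fib]; ring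

theorem tau_pow_le_abs_mul_tau_sub (n m : ℕ) (p : ℤ) (hm : m < Nat.fib (n + 1))
    (hmp : m ≠ 0 ∨ p ≠ 0) : tau ^ n ≤ |m * tau - p| := by
  induction n using Nat.twoStepInduction generalizing m p with
  | zero | one =>
    obtain rfl : m = 0 := by simpa using hm
    have hp : p ≠ 0 := by simpa using hmp
    rw [Nat.cast_zero, zero_mul, zero_sub, abs_neg]
    calc tau ^ _ ≤ 1 := pow_le_one₀ tau_pos.le tau_lt_one.le
      _ ≤ |(p : ℝ)| := by exact_mod_cast Int.one_le_abs hp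
  | more n ih ih1 =>
    have hτ : tau ^ (n + 2) ≤ tau ^ (n + 1) :=
      pow_le_pow_of_le_one tau_pos.le tau_lt_one.le (by omega)
    rcases lt_or_ge m (Nat.fib (n + 2)) with hm' | hm'
    · exact hτ.trans (ih1 m p hm' hmp)
    obtain ⟨r, rfl⟩ := Nat.exists_eq_add_of_le hm'
    have hr : r < Nat.fib (n + 1) := by
      have : Nat.fib (n + 2 + 1) = Nat.fib (n + 1) + Nat.fib (n + 2) := Nat.fib_add_two
      omega
    -- `m = F_{n+2} + r` with `r < F_{n+1}`, and `F_{n+2} τ` is within `τ^{n+2}` of `F_{n+1}`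
    set q : ℤ := p - Nat.fib (n + 1)
    have hsplit : ((Nat.fib (n + 2) + r : ℕ) : ℝ) * tau - p
        = (r * tau - q) - (-tau) ^ (n + 2) := by
      push_cast [q]; rw [add_mul, fib_succ_mul_tau]; ring
    have hpow : |(-tau) ^ (n + 2)| = tau ^ (n + 2) := by
      rw [abs_pow, abs_neg, abs_of_pos tau_pos]
    rw [hsplit]
    by_cases hrq : r = 0 ∧ q = 0
    · obtain ⟨rfl, hq⟩ := hrq
      simp [hq, hpow]
    calc tau ^ (n + 2) ≤ tau ^ (n + 1) := hτ
      _ = tau ^ n - tau ^ (n + 2) := by linear_combination tau ^ n * tau_sq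
      _ ≤ |r * tau - q| - |(-tau) ^ (n + 2)| := by
        rw [hpow]; gcongr; exact ih r q hr (by tauto)
      _ ≤ _ := abs_sub_abs_le_abs_sub _ _

theorem Int.floor_add_eq_floor_of_abs_lt {x ε δ : ℝ} (hx : ∀ p : ℤ, δ ≤ |x - p|)
    (hε : |ε| < δ) : ⌊x + ε⌋ = ⌊x⌋ := by
  have hbelow : δ ≤ x - ⌊x⌋ := by
    simpa [abs_of_nonneg (Int.fract_nonneg x)] using hx ⌊x⌋
  have habove : δ ≤ ⌊x⌋ + 1 - x := by
    have hpos : 0 < (⌊x⌋ + 1 : ℝ) - x := by linarith [Int.lt_floor_add_one x]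
    have := hx (⌊x⌋ + 1)
    rwa [Int.cast_add, Int.cast_one, abs_sub_comm, abs_of_pos hpos] at this
  rw [Int.floor_eq_iff]
  constructor <;> linarith [abs_lt.mp hε]

theorem floor_fib_succ_add_mul_tau {n m : ℕ} (hm0 : 0 < m) (hm : m < Nat.fib (n + 1)) :
    ⌊(Nat.fib (n + 1) + m : ℝ) * tau⌋ = Nat.fib n + ⌊m * tau⌋ := by
  have hshift : (Nat.fib (n + 1) + m : ℝ) * tau
      = (m * tau - (-tau) ^ (n + 1)) + (Nat.fib n : ℤ) := by
    rw [add_mul, fib_succ_mul_tau]; push_cast; ring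
  have hsmall : |-(-tau) ^ (n + 1)| < tau ^ n := by
    rw [abs_neg, abs_pow, abs_neg, abs_of_pos tau_pos]
    exact pow_lt_pow_right_of_lt_one₀ tau_pos tau_lt_one n.lt_succ_self
  have hfar (p : ℤ) : tau ^ n ≤ |m * tau - p| :=
    tau_pow_le_abs_mul_tau_sub n m p hm (Or.inl hm0.ne')
  rw [hshift, Int.floor_add_intCast, sub_eq_add_neg,
    Int.floor_add_eq_floor_of_abs_lt hfar hsmall, add_comm]

/-- For every `n ≥ 3` and `2 ≤ k ≤ F_{n−1}`,
`⌊(F_n + k)·τ⌋ − ⌊(F_n + k − 1)·τ⌋ = ⌊k·τ⌋ − ⌊(k − 1)·τ⌋`,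
where `τ = (√5−1)/2`. -/
theorem floor_diff_tau (n k : ℕ) (hn : 3 ≤ n) (hk1 : 2 ≤ k)
    (hk2 : k ≤ Nat.fib (n - 1)) :
    ⌊((Nat.fib n : ℝ) + (k : ℝ)) * ((Real.sqrt 5 - 1) / 2)⌋
      - ⌊((Nat.fib n : ℝ) + (k : ℝ) - 1) * ((Real.sqrt 5 - 1) / 2)⌋
    = ⌊(k : ℝ) * ((Real.sqrt 5 - 1) / 2)⌋
      - ⌊((k : ℝ) - 1) * ((Real.sqrt 5 - 1) / 2)⌋ := by
  rw [show (Real.sqrt 5 - 1) / 2 = tau from rfl]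
  obtain ⟨n, rfl⟩ : ∃ n', n = n' + 1 := ⟨n - 1, by omega⟩
  obtain ⟨j, rfl⟩ : ∃ j, k = j + 1 := ⟨k - 1, by omega⟩
  rw [Nat.add_sub_cancel] at hk2
  have hk : j + 1 < Nat.fib (n + 1) := hk2.trans_lt (Nat.fib_lt_fib_succ (by omega))
  have hk' := floor_fib_succ_add_mul_tau (by omega) hk
  have hj' := floor_fib_succ_add_mul_tau (n := n) (m := j) (by omega) (by omega)
  push_cast at hk' ⊢
  rw [add_sub_cancel_right, add_sub_assoc, add_sub_cancel_right, hk', hj']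
  ring
end

section
/- For every integer n ≥ 3 and every integer k with 2 ≤ k ≤ F_{n−1}, one has ⌊(F_n + k)·φ⌋ − ⌊(F_n + k − 1)·φ⌋ = ⌊k·φ⌋ − ⌊(k − 1)·φ⌋, where φ = (1+√5)/2 and F_m denotes the m-th Fibonacci number. -/
/-!
Since `F_{n+1} - φ F_n = ψ^n`, we have `(F_n + k) φ = F_{n+1} + k φ - ψ^n`, so the floor of the
left side is `F_{n+1} + ⌊k φ⌋` as soon as `|ψ^n| = φ^{-n}` is smaller than the distance from `k φ`
to the nearest integer. That distance is at least `1 / (k √5 + 1)`, because for an integer `m` the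
product `(k φ - m)(k ψ - m) = m² - k m - k²` is a nonzero integer, and `k √5 + 1 < φ^n` whenever
`k ≤ F_{n-1}`. Applying this to `k` and `k - 1` and subtracting gives the theorem.
-/

open Real goldenRatio

lemma Int.floor_add_eq_floor_of_abs_lt_s13 {x e : ℝ} (h : ∀ m : ℤ, |e| < |x - m|) :
    ⌊x + e⌋ = ⌊x⌋ := by
  have below : |e| < x - ⌊x⌋ := by
    simpa only [abs_of_nonneg (sub_nonneg.mpr (Int.floor_le x))] using h ⌊x⌋
  have above : |e| < ⌊x⌋ + 1 - x := by
    have hlt : 0 < (⌊x⌋ : ℝ) + 1 - x := by linarith [Int.lt_floor_add_one x]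
    simpa only [Int.cast_add, Int.cast_one, abs_sub_comm x, abs_of_pos hlt] using h (⌊x⌋ + 1)
  rw [Int.floor_eq_iff]
  constructor <;> linarith [le_abs_self e, neg_abs_le e]

lemma one_le_abs_natCast_mul_goldenRatio_sub_mul {k : ℕ} (hk : k ≠ 0) (m : ℤ) :
    1 ≤ |k * φ - m| * |k * ψ - m| := by
  have hφ : (k : ℝ) * φ - m ≠ 0 :=
    sub_ne_zero.mpr ((goldenRatio_irrational.natCast_mul hk).ne_int m)
  have hψ : (k : ℝ) * ψ - m ≠ 0 :=
    sub_ne_zero.mpr ((goldenConj_irrational.natCast_mul hk).ne_int m)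
  have norm_eq : ((k : ℝ) * φ - m) * (k * ψ - m) = ((m ^ 2 - k * m - k ^ 2 : ℤ) : ℝ) := by
    push_cast
    linear_combination (k : ℝ) ^ 2 * goldenRatio_mul_goldenConj
      - (k : ℝ) * m * goldenRatio_add_goldenConj
  have norm_ne : m ^ 2 - k * m - k ^ 2 ≠ 0 := by
    rintro h
    exact mul_ne_zero hφ hψ (by rw [norm_eq, h, Int.cast_zero])
  rw [← abs_mul, norm_eq, ← Int.cast_abs]
  exact_mod_cast Int.one_le_abs norm_ne

lemma inv_le_abs_natCast_mul_goldenRatio_sub {k : ℕ} (hk : k ≠ 0) (m : ℤ) :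
    (k * √5 + 1)⁻¹ ≤ |k * φ - m| := by
  set d := |(k : ℝ) * φ - m|
  have hpos : (0 : ℝ) < k * √5 + 1 := by positivity
  have conj_le : |(k : ℝ) * ψ - m| ≤ d + k * √5 := by
    calc |(k : ℝ) * ψ - m| = |(k * φ - m) - k * √5| := by
          rw [← goldenRatio_sub_goldenConj]; ring_nf
      _ ≤ d + |k * √5| := abs_sub _ _
      _ = d + k * √5 := by rw [abs_of_nonneg (by positivity)]
  rw [inv_le_iff_one_le_mul₀' hpos]
  rcases le_or_gt d 1 with hd | hd
  · calc 1 ≤ d * |(k : ℝ) * ψ - m| := one_le_abs_natCast_mul_goldenRatio_sub_mul hk m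
      _ ≤ d * (d + k * √5) := mul_le_mul_of_nonneg_left conj_le (abs_nonneg _)
      _ ≤ d * (k * √5 + 1) := mul_le_mul_of_nonneg_left (by linarith) (abs_nonneg _)
      _ = (k * √5 + 1) * d := mul_comm _ _
  · nlinarith [sqrt_nonneg 5]

lemma fib_mul_sqrt_five_add_one_lt_goldenRatio_pow {m : ℕ} (hm : 2 ≤ m) :
    (Nat.fib m : ℝ) * √5 + 1 < φ ^ (m + 1) := by
  obtain ⟨j, rfl⟩ : ∃ j, m = j + 2 := ⟨m - 2, by omega⟩
  have fib_eq : (Nat.fib (j + 2) : ℝ) * √5 = φ ^ (j + 2) - ψ ^ (j + 2) := by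
    rw [coe_fib_eq]; field_simp
  have abs_goldenConj_lt : |ψ| < 1 := abs_lt.mpr ⟨neg_one_lt_goldenConj, by linarith [goldenConj_neg]⟩
  have conj_pow_le : -ψ ^ (j + 2) ≤ ψ + 1 := by
    calc -ψ ^ (j + 2) ≤ |ψ| ^ (j + 2) := by rw [← abs_pow]; exact neg_le_abs _
      _ ≤ |ψ| ^ 2 := pow_le_pow_of_le_one (abs_nonneg _) abs_goldenConj_lt.le (by omega)
      _ = ψ + 1 := by rw [sq_abs, goldenConj_sq]
  have two_lt_sqrt_five : (2 : ℝ) < √5 := by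
    rw [show (2 : ℝ) = √(2 ^ 2) by simp]; exact sqrt_lt_sqrt (by norm_num) (by norm_num)
  have goldenRatio_le_pow : φ ≤ φ ^ (j + 1) :=
    le_self_pow₀ one_lt_goldenRatio.le (by omega)
  have := goldenRatio_pow_sub_goldenRatio_pow (j + 1)
  linarith [goldenRatio_sub_goldenConj]

lemma floor_fib_add_mul_goldenRatio {n k : ℕ} (hn : 3 ≤ n) (hk : k ≠ 0)
    (hkn : k ≤ Nat.fib (n - 1)) :
    ⌊((Nat.fib n : ℝ) + k) * φ⌋ = Nat.fib (n + 1) + ⌊(k : ℝ) * φ⌋ := by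
  have shift : ((Nat.fib n : ℝ) + k) * φ = (k * φ + -ψ ^ n) + (Nat.fib (n + 1) : ℤ) := by
    push_cast; linarith [fib_succ_sub_goldenRatio_mul_fib n]
  have bound : (k : ℝ) * √5 + 1 < φ ^ n := by
    have hk' : (k : ℝ) ≤ Nat.fib (n - 1) := by exact_mod_cast hkn
    have := fib_mul_sqrt_five_add_one_lt_goldenRatio_pow (m := n - 1) (by omega)
    rw [Nat.sub_add_cancel (by omega)] at this
    nlinarith [sqrt_nonneg 5]
  have small : |-ψ ^ n| < (k * √5 + 1)⁻¹ := by
    rw [abs_neg, abs_pow, abs_of_neg goldenConj_neg, ← inv_goldenRatio, inv_pow]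
    exact inv_strictAnti₀ (by positivity) bound
  rw [shift, Int.floor_add_intCast, add_comm,
    Int.floor_add_eq_floor_of_abs_lt_s13 fun m ↦
      small.trans_le (inv_le_abs_natCast_mul_goldenRatio_sub hk m)]

/-- For every `n ≥ 3` and `2 ≤ k ≤ F_{n−1}`,
`⌊(F_n + k)·φ⌋ − ⌊(F_n + k − 1)·φ⌋ = ⌊k·φ⌋ − ⌊(k − 1)·φ⌋`,
where `φ = (1+√5)/2`. -/
theorem floor_diff_phi (n k : ℕ) (hn : 3 ≤ n) (hk1 : 2 ≤ k)
    (hk2 : k ≤ Nat.fib (n - 1)) :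
    ⌊((Nat.fib n : ℝ) + (k : ℝ)) * ((1 + Real.sqrt 5) / 2)⌋
      - ⌊((Nat.fib n : ℝ) + (k : ℝ) - 1) * ((1 + Real.sqrt 5) / 2)⌋
    = ⌊(k : ℝ) * ((1 + Real.sqrt 5) / 2)⌋
      - ⌊((k : ℝ) - 1) * ((1 + Real.sqrt 5) / 2)⌋ := by
  have floor_k := floor_fib_add_mul_goldenRatio hn (by omega : k ≠ 0) hk2
  have floor_pred := floor_fib_add_mul_goldenRatio hn (by omega : k - 1 ≠ 0) (by omega)
  rw [Nat.cast_sub (by omega), Nat.cast_one] at floor_pred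
  rw [add_sub_assoc]
  change _ - ⌊(_ + ((k : ℝ) - 1)) * φ⌋ = ⌊(k : ℝ) * φ⌋ - ⌊((k : ℝ) - 1) * φ⌋
  rw [floor_k, floor_pred]
  ring
end

section
/- For every integer n ≥ 3, one has ⌊(F_n + 1)·φ²⌋ − 1 = F_{n+2} + 1, where φ = (1+√5)/2 and F_m denotes the m-th Fibonacci number. -/
/-!
From `F_{n+1} - φ F_n = ψ ^ n` and `φ² = φ + 1 = 2 - ψ` one gets
`(F_n + 1) φ² = F_{n+2} + 2 + (-ψ - ψ ^ n)`. For `n ≥ 3` we have `|ψ ^ n| < ψ² = ψ + 1`,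
and `ψ < -1/2`, so `-ψ - ψ ^ n` lies in `[0, 1)` and the floor is `F_{n+2} + 2`.
-/

open Real goldenRatio

theorem Real.fib_mul_goldenRatio_sq (n : ℕ) :
    (Nat.fib n : ℝ) * φ ^ 2 = Nat.fib (n + 2) - ψ ^ n := by
  rw [goldenRatio_sq, ← fib_succ_sub_goldenRatio_mul_fib, Nat.fib_add_two, Nat.cast_add]
  ring

theorem Real.abs_goldenConj_pow_lt_sq {n : ℕ} (hn : 2 < n) : |ψ ^ n| < ψ ^ 2 := by
  have h_abs_lt_one : |ψ| < 1 := abs_lt.mpr ⟨neg_one_lt_goldenConj, goldenConj_neg.trans one_pos⟩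
  rw [abs_pow, ← sq_abs ψ]
  exact pow_lt_pow_right_of_lt_one₀ (abs_pos.mpr goldenConj_ne_zero) h_abs_lt_one hn

theorem Real.goldenConj_lt_neg_half : ψ < -1 / 2 := by
  have h_sqrt : (2 : ℝ) < √5 := by
    rw [Real.lt_sqrt] <;> norm_num
  rw [goldenConj]
  linarith

theorem Real.fib_add_one_mul_goldenRatio_sq (n : ℕ) :
    ((Nat.fib n : ℝ) + 1) * φ ^ 2 = ((Nat.fib (n + 2) + 2 : ℤ) : ℝ) + (-ψ - ψ ^ n) := by
  rw [add_mul, fib_mul_goldenRatio_sq, one_mul, goldenRatio_sq, ← one_sub_goldenConj]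
  push_cast
  ring

/-- For every `n ≥ 3`, `⌊(F_n + 1)·φ²⌋ − 1 = F_{n+2} + 1`,
where `φ = (1+√5)/2`. -/
theorem floor_fib_add_one_phi_sq (n : ℕ) (hn : 3 ≤ n) :
    ⌊((Nat.fib n : ℝ) + 1) * ((1 + Real.sqrt 5) / 2) ^ 2⌋ - 1
      = (Nat.fib (n + 2) : ℤ) + 1 := by
  change ⌊((Nat.fib n : ℝ) + 1) * φ ^ 2⌋ - 1 = _
  have h_frac : ⌊-ψ - ψ ^ n⌋ = 0 := by
    have h_pow := abs_lt.mp (abs_goldenConj_pow_lt_sq hn)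
    have h_sq := goldenConj_sq
    have h_neg := goldenConj_lt_neg_half
    rw [Int.floor_eq_zero_iff]
    constructor <;> linarith
  rw [fib_add_one_mul_goldenRatio_sq, Int.floor_intCast_add, h_frac]
  ring
end
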